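/- For every odd g ≥ 1, the quotient ring ℂ[α,γ]/J_g^+ is a finite-dimensional ℂ-vector space of dimension (g+1)²/4. -/
import Mathlib


open MvPolynomial

/-- ζ_k^+ ∈ ℂ[α,γ] (variables: X 0 = α, X 1 = γ):
    ζ_{k+1}^+ = α ζ_k^+ + 16k² ζ_{k−1}^+ + 2k(k−1) γ ζ_{k−2}^+ for k even, and
    ζ_{k+1}^+ = α ζ_k^+ + 2k(k−1) γ ζ_{k−2}^+ for k odd. -/
noncomputable def zp : ℕ → MvPolynomial (Fin 2) ℂ
  | 0 => 1
  | 1 => X 0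
  | 2 => X 0 * zp 1
  | (n + 3) =>
      if n % 2 = 0 then
        X 0 * zp (n + 2) + C (16 * ((n : ℂ) + 2) ^ 2) * zp (n + 1)
          + C (2 * ((n : ℂ) + 2) * ((n : ℂ) + 1)) * X 1 * zp n
      else
        X 0 * zp (n + 2) + C (2 * ((n : ℂ) + 2) * ((n : ℂ) + 1)) * X 1 * zp n

/-- ζ_k^+ for an integer index k, with ζ_k^+ = 0 for k < 0. -/
noncomputable def zpZ (k : ℤ) : MvPolynomial (Fin 2) ℂ :=
  if k < 0 then 0 else zp k.toNat

/-- J_g^+ = (ζ_g^+, ζ_{g+1}^+, ζ_{g+2}^+) ⊆ ℂ[α,γ], for a natural number g. -/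
noncomputable def Jp (g : ℕ) : Ideal (MvPolynomial (Fin 2) ℂ) :=
  Ideal.span {zp g, zp (g + 1), zp (g + 2)}

/-- exponent vector α^i γ^s -/
noncomputable def E (i s : ℕ) : Fin 2 →₀ ℕ := Finsupp.single 0 i + Finsupp.single 1 s

lemma E_apply0 (i s : ℕ) : E i s 0 = i := by simp [E]
lemma E_apply1 (i s : ℕ) : E i s 1 = s := by simp [E, Finsupp.single_apply]

lemma E_def (d : Fin 2 →₀ ℕ) : E (d 0) (d 1) = d := by
  ext a; fin_cases a
  · simp [E]
  · simp [E, Finsupp.single_apply]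

lemma E_inj {i s i' s' : ℕ} (h : E i s = E i' s') : i = i' ∧ s = s' := by
  constructor
  · have := congrArg (fun d => d 0) h; simpa [E_apply0] using this
  · have := congrArg (fun d => d 1) h; simpa [E_apply1] using this

lemma E_eq_iff {i s i' s' : ℕ} : E i s = E i' s' ↔ (i = i' ∧ s = s') := by
  constructor
  · exact E_inj
  · rintro ⟨rfl, rfl⟩; rfl

lemma coeff_X0_mul (p : MvPolynomial (Fin 2) ℂ) (i s : ℕ) :
    coeff (E i s) (X 0 * p) = if 1 ≤ i then coeff (E (i-1) s) p else 0 := by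
  rw [coeff_X_mul']
  by_cases h : 1 ≤ i
  · rw [if_pos h, if_pos]
    · congr 1
      ext a; fin_cases a
      · simp [E, Finsupp.single_apply]
      · simp [E, Finsupp.single_apply]
    · simp only [Finsupp.mem_support_iff, E_apply0]; omega
  · rw [if_neg h, if_neg]
    simp only [Finsupp.mem_support_iff, E_apply0]; omega

lemma coeff_X1_mul (p : MvPolynomial (Fin 2) ℂ) (i s : ℕ) :
    coeff (E i s) (X 1 * p) = if 1 ≤ s then coeff (E i (s-1)) p else 0 := by
  rw [coeff_X_mul']
  by_cases h : 1 ≤ s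
  · rw [if_pos h, if_pos]
    · congr 1
      ext a; fin_cases a
      · simp [E, Finsupp.single_apply]
      · simp [E, Finsupp.single_apply]
    · simp only [Finsupp.mem_support_iff, E_apply1]; omega
  · rw [if_neg h, if_neg]
    simp only [Finsupp.mem_support_iff, E_apply1]; omega

lemma coeff_X1_pow_mul (p : MvPolynomial (Fin 2) ℂ) (c i s : ℕ) :
    coeff (E i s) (X 1 ^ c * p) = if c ≤ s then coeff (E i (s-c)) p else 0 := by
  induction c generalizing s with
  | zero => simp
  | succ c ih =>
    have h1 : X 1 ^ (c+1) * p = X 1 * (X 1 ^ c * p) := by ring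
    rw [h1, coeff_X1_mul]
    by_cases h : 1 ≤ s
    · rw [if_pos h, ih]
      have h2 : (c ≤ s - 1 ↔ c + 1 ≤ s) := by omega
      by_cases h3 : c + 1 ≤ s
      · rw [if_pos (h2.mpr h3), if_pos h3]
        congr 2
        omega
      · rw [if_neg (fun hc => h3 (h2.mp hc)), if_neg h3]
    · rw [if_neg h, if_neg (by omega)]

lemma coeff_X0_pow_mul (p : MvPolynomial (Fin 2) ℂ) (c i s : ℕ) :
    coeff (E i s) (X 0 ^ c * p) = if c ≤ i then coeff (E (i-c) s) p else 0 := by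
  induction c generalizing i with
  | zero => simp
  | succ c ih =>
    have h1 : X 0 ^ (c+1) * p = X 0 * (X 0 ^ c * p) := by ring
    rw [h1, coeff_X0_mul]
    by_cases h : 1 ≤ i
    · rw [if_pos h, ih]
      have h2 : (c ≤ i - 1 ↔ c + 1 ≤ i) := by omega
      by_cases h3 : c + 1 ≤ i
      · rw [if_pos (h2.mpr h3), if_pos h3]
        congr 2
        omega
      · rw [if_neg (fun hc => h3 (h2.mp hc)), if_neg h3]
    · rw [if_neg h, if_neg (by omega)]

lemma E_i0 (i : ℕ) : E i 0 = Finsupp.single (0 : Fin 2) i := by simp [E]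
lemma E_0s (s : ℕ) : E 0 s = Finsupp.single (1 : Fin 2) s := by simp [E]

lemma X0_pow_mono (i : ℕ) : (X 0 : MvPolynomial (Fin 2) ℂ) ^ i = monomial (E i 0) 1 := by
  rw [X_pow_eq_monomial, E_i0]

lemma X1_pow_mono (s : ℕ) : (X 1 : MvPolynomial (Fin 2) ℂ) ^ s = monomial (E 0 s) 1 := by
  rw [X_pow_eq_monomial, E_0s]

lemma mono_eq (i s : ℕ) :
    (monomial (E i s) (1:ℂ) : MvPolynomial (Fin 2) ℂ) = X 0 ^ i * X 1 ^ s := by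
  rw [X0_pow_mono, X1_pow_mono, monomial_mul, one_mul]
  congr 1
  simp [E]

lemma zp_odd_rec (s : ℕ) : zp (2*s+3) = X 0 * zp (2*s+2)
    + C (16 * (2*(s:ℂ)+2)^2) * zp (2*s+1)
    + C (2 * (2*(s:ℂ)+2) * (2*(s:ℂ)+1)) * X 1 * zp (2*s) := by
  have h : 2*s+3 = (2*s)+3 := by ring
  rw [h, zp]
  have h2 : (2*s) % 2 = 0 := by omega
  rw [if_pos h2]
  push_cast
  ring_nf

lemma zp_even_rec (s : ℕ) : zp (2*s+4) = X 0 * zp (2*s+3)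
    + C (2 * (2*(s:ℂ)+3) * (2*(s:ℂ)+2)) * X 1 * zp (2*s+1) := by
  have h : 2*s+4 = (2*s+1)+3 := by ring
  rw [h, zp]
  have h2 : (2*s+1) % 2 ≠ 0 := by omega
  rw [if_neg h2]
  push_cast
  ring_nf

lemma zp_two : zp 2 = X 0 * X 0 := by rw [zp]; rfl

lemma zp3_id : zp 3 = X 0 ^ 2 * zp 1 + C 64 * zp 1 + C 4 * X 1 := by
  have h := zp_odd_rec 0
  norm_num at h
  rw [h, zp_two, show zp 1 = X 0 from rfl, show zp 0 = 1 from rfl]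
  ring

lemma zp_degreeOf_le : ∀ k, degreeOf 0 (zp k) ≤ k := by
  intro k
  induction k using Nat.strong_induction_on with
  | _ k ih =>
    match k with
    | 0 =>
      rw [show zp 0 = 1 from rfl, ← C_1]
      rw [degreeOf_C]
    | 1 => rw [zp]; simp [degreeOf_X]
    | 2 =>
      rw [zp_two]
      calc degreeOf 0 (X 0 * X 0 : MvPolynomial (Fin 2) ℂ) ≤ _ := degreeOf_mul_le _ _ _
      _ ≤ 2 := by simp [degreeOf_X]
    | (n + 3) =>
      have h0 := ih n (by omega)
      have h1 := ih (n+1) (by omega)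
      have h2 := ih (n+2) (by omega)
      have hX : degreeOf 0 (X 1 : MvPolynomial (Fin 2) ℂ) = 0 := by
        rw [degreeOf_X]; simp
      have key : ∀ c : ℂ, degreeOf 0 (C c * X 1 * zp n) ≤ n + 3 := by
        intro c
        calc degreeOf 0 (C c * X 1 * zp n) ≤ degreeOf 0 (C c * X 1) + degreeOf 0 (zp n) :=
              degreeOf_mul_le _ _ _
        _ ≤ (degreeOf 0 (C c : MvPolynomial (Fin 2) ℂ) + degreeOf 0 (X 1 : MvPolynomial (Fin 2) ℂ)) + n := by
              exact add_le_add (degreeOf_mul_le _ _ _) h0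
        _ ≤ n + 3 := by simp [hX, degreeOf_C]; try omega
      have keyX : degreeOf 0 (X 0 * zp (n+2)) ≤ n + 3 := by
        calc degreeOf 0 (X 0 * zp (n+2)) ≤ degreeOf 0 (X 0 : MvPolynomial (Fin 2) ℂ) + degreeOf 0 (zp (n+2)) :=
              degreeOf_mul_le _ _ _
        _ ≤ 1 + (n+2) := by
              refine add_le_add ?_ h2
              simp [degreeOf_X]
        _ ≤ n + 3 := by omega
      have keyC : ∀ c : ℂ, degreeOf 0 (C c * zp (n+1)) ≤ n + 3 := by
        intro c
        calc degreeOf 0 (C c * zp (n+1)) ≤ degreeOf 0 (C c : MvPolynomial (Fin 2) ℂ) + degreeOf 0 (zp (n+1)) :=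
              degreeOf_mul_le _ _ _
        _ ≤ n + 3 := by simp [degreeOf_C]; try omega
      rw [zp]
      split
      · refine le_trans (degreeOf_add_le _ _ _) ?_
        simp only [sup_le_iff]
        refine ⟨le_trans (degreeOf_add_le _ _ _) ?_, key _⟩
        simp only [sup_le_iff]
        exact ⟨keyX, keyC _⟩
      · refine le_trans (degreeOf_add_le _ _ _) ?_
        simp only [sup_le_iff]
        exact ⟨keyX, key _⟩

lemma coeff_zero_of_high {p : MvPolynomial (Fin 2) ℂ} {k : ℕ} (h : degreeOf 0 p ≤ k)
    (d : Fin 2 →₀ ℕ) (hd : k < d 0) : coeff d p = 0 := by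
  by_contra hc
  have hmem : d ∈ p.support := by simpa [mem_support_iff] using hc
  have := (degreeOf_lt_iff (n := 0) (f := p) (d := k + 1) (by omega)).mp (by omega) d hmem
  omega

lemma zp_coeff_top : ∀ k i s, k ≤ i →
    coeff (E i s) (zp k) = if i = k ∧ s = 0 then 1 else 0 := by
  intro k
  induction k using Nat.strong_induction_on with
  | _ k ih =>
    match k with
    | 0 =>
      intro i s hi
      rw [show zp 0 = 1 from rfl]
      rw [coeff_one]
      congr 1
      rw [eq_iff_iff]
      constructor
      · intro h
        have := congrArg (fun d => d 0) h
        have h2 := congrArg (fun d => d 1) h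
        simp [E_apply0, E_apply1] at this h2
        omega
      · rintro ⟨rfl, rfl⟩
        rw [show E 0 0 = 0 from by ext a; fin_cases a <;> simp [E, Finsupp.single_apply]]
    | 1 =>
      intro i s hi
      rw [show zp 1 = X 0 from rfl,
        show (X 0 : MvPolynomial (Fin 2) ℂ) = monomial (E 1 0) 1 from by
          rw [← X0_pow_mono, pow_one]]
      rw [coeff_monomial]
      congr 1
      rw [eq_iff_iff, E_eq_iff]
      constructor <;> (rintro ⟨h1, h2⟩; omega)
    | 2 =>
      intro i s hi
      rw [zp_two, show (X 0 : MvPolynomial (Fin 2) ℂ) * X 0 = X 0 ^ 2 from by ring, X0_pow_mono]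
      rw [coeff_monomial]
      congr 1
      rw [eq_iff_iff, E_eq_iff]
      constructor <;> (rintro ⟨h1, h2⟩; omega)
    | (n + 3) =>
      intro i s hi
      have hdeg0 := zp_degreeOf_le n
      have hdeg1 := zp_degreeOf_le (n+1)
      have hX0 : coeff (E i s) (X 0 * zp (n+2)) = if i = n + 3 ∧ s = 0 then 1 else 0 := by
        rw [coeff_X0_mul, if_pos (by omega : 1 ≤ i)]
        rw [ih (n+2) (by omega) (i-1) s (by omega)]
        congr 1
        rw [eq_iff_iff]
        constructor <;> (rintro ⟨h1, h2⟩; constructor <;> omega)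
      have hC1 : ∀ c : ℂ, coeff (E i s) (C c * zp (n+1)) = 0 := by
        intro c
        rw [coeff_C_mul, coeff_zero_of_high hdeg1 _ (by rw [E_apply0]; omega), mul_zero]
      have hCX : ∀ c : ℂ, coeff (E i s) (C c * X 1 * zp n) = 0 := by
        intro c
        rw [mul_assoc, coeff_C_mul, coeff_X1_mul]
        split
        · rw [coeff_zero_of_high hdeg0 _ (by rw [E_apply0]; omega), mul_zero]
        · rw [mul_zero]
      rw [zp]
      split
      · rw [coeff_add, coeff_add, hX0, hC1, hCX, add_zero, add_zero]
      · rw [coeff_add, hX0, hCX, add_zero]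

/-- exponent of γ in the leading coefficient -/
def ee (n i : ℕ) : ℕ := (n+1) - (i+1)/2

noncomputable def w (n : ℕ) (i : ℕ) : MvPolynomial (Fin 2) ℂ :=
  if i = 0 then X 1 ^ (n+1)
  else if i < 2*n+1 then
    (if i % 2 = 1 then X 1 ^ (ee n i) * zp i else X 0 * (X 1 ^ (ee n i) * zp (i-1)))
  else X 0 ^ (i - (2*n+1)) * zp (2*n+1)

lemma ee_zero (n : ℕ) : ee n 0 = n + 1 := by simp [ee]

lemma ee_big {n i : ℕ} (h : 2*n+1 ≤ i) : ee n i = 0 := by unfold ee; omega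

lemma w_zero (n : ℕ) : w n 0 = X 1 ^ (n+1) := by simp [w]

lemma w_odd {n i : ℕ} (h : i % 2 = 1) (h2 : i ≤ 2*n+1) :
    w n i = X 1 ^ (ee n i) * zp i := by
  rcases Nat.lt_or_ge i (2*n+1) with h3 | h3
  · rw [w, if_neg (by omega), if_pos h3, if_pos h]
  · have : i = 2*n+1 := by omega
    subst this
    rw [w, if_neg (by omega), if_neg (by omega), ee_big (le_refl _), pow_zero, one_mul,
      Nat.sub_self, pow_zero, one_mul]

lemma w_even {n i : ℕ} (h : i % 2 = 0) (h0 : i ≠ 0) (h2 : i < 2*n+1) :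
    w n i = X 0 * (X 1 ^ (ee n i) * zp (i-1)) := by
  rw [w, if_neg h0, if_pos h2, if_neg (by omega)]

lemma w_big {n i : ℕ} (h : 2*n+1 ≤ i) :
    w n i = X 0 ^ (i - (2*n+1)) * zp (2*n+1) := by
  rw [w, if_neg (by omega), if_neg (by omega)]

lemma wstr (n : ℕ) : ∀ i i' s', i ≤ i' →
    coeff (E i' s') (w n i) = if i' = i ∧ s' = ee n i then 1 else 0 := by
  intro i i' s' hii
  rcases Nat.eq_zero_or_pos i with rfl | hpos
  · rw [w_zero, X1_pow_mono, coeff_monomial, ee_zero]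
    congr 1
    rw [eq_iff_iff, E_eq_iff]
    constructor <;> (rintro ⟨a, b⟩; omega)
  rcases Nat.lt_or_ge i (2*n+1) with hlt | hge
  · rcases Nat.even_or_odd i with he | ho
    · have hmod : i % 2 = 0 := Nat.even_iff.mp he
      rw [w_even hmod (by omega) hlt, coeff_X0_mul, if_pos (by omega), coeff_X1_pow_mul]
      split_ifs with h1 h2 h3
      · rw [zp_coeff_top _ _ _ (by omega)]
        split_ifs with h4 <;> first | rfl | (exfalso; omega)
      · rw [zp_coeff_top _ _ _ (by omega)]
        split_ifs with h4 <;> first | rfl | (exfalso; omega)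
      · exfalso; omega
      · rfl
    · have hmod : i % 2 = 1 := Nat.odd_iff.mp ho
      rw [w_odd hmod (by omega), coeff_X1_pow_mul]
      split_ifs with h1 h2 h3
      · rw [zp_coeff_top _ _ _ (by omega)]
        split_ifs with h4 <;> first | rfl | (exfalso; omega)
      · rw [zp_coeff_top _ _ _ (by omega)]
        split_ifs with h4 <;> first | rfl | (exfalso; omega)
      · exfalso; omega
      · rfl
  · rw [w_big hge, coeff_X0_pow_mul, if_pos (by omega), zp_coeff_top _ _ _ (by omega),
      ee_big hge]
    congr 1
    rw [eq_iff_iff]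
    constructor <;> (rintro ⟨a, b⟩; constructor <;> omega)

noncomputable def Uu (n : ℕ) : Submodule ℂ (MvPolynomial (Fin 2) ℂ) :=
  Submodule.span ℂ {p : MvPolynomial (Fin 2) ℂ | ∃ i c, p = X 1 ^ c * w n i}

noncomputable def Vv (n : ℕ) : Submodule ℂ (MvPolynomial (Fin 2) ℂ) :=
  Submodule.span ℂ ((fun μ : ℕ × ℕ => (monomial (E μ.1 μ.2) (1:ℂ))) '' {μ | μ.2 < ee n μ.1})

lemma ustr (n : ℕ) {i s : ℕ} (hs : ee n i ≤ s) : ∀ i' s', i ≤ i' →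
    coeff (E i' s') (X 1 ^ (s - ee n i) * w n i) = if i' = i ∧ s' = s then 1 else 0 := by
  intro i' s' hii
  rw [coeff_X1_pow_mul]
  split_ifs with h1 h2 h3
  · rw [wstr n i i' _ hii]
    split_ifs with h4 <;> first | rfl | (exfalso; omega)
  · rw [wstr n i i' _ hii]
    split_ifs with h4 <;> first | rfl | (exfalso; omega)
  · exfalso; omega
  · rfl

lemma mono_mem (n : ℕ) : ∀ i s (c : ℂ), (monomial (E i s) c : MvPolynomial (Fin 2) ℂ) ∈ Vv n ⊔ Uu n := by
  intro i
  induction i using Nat.strong_induction_on with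
  | _ i ih =>
    intro s c
    rcases Nat.lt_or_ge s (ee n i) with hs | hs
    · have h1 : (monomial (E i s) (1:ℂ) : MvPolynomial (Fin 2) ℂ) ∈ Vv n :=
        Submodule.subset_span ⟨(i, s), hs, rfl⟩
      have := Submodule.smul_mem (Vv n) c h1
      rw [smul_monomial, smul_eq_mul, mul_one] at this
      exact Submodule.mem_sup_left this
    · set u := X 1 ^ (s - ee n i) * w n i with hu
      have hUmem : u ∈ Uu n := Submodule.subset_span ⟨i, s - ee n i, rfl⟩
      set q := c • u - monomial (E i s) c with hq
      have hsupp : ∀ d ∈ q.support, d 0 < i := by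
        intro d hd
        by_contra hcon
        push_neg at hcon
        have hcoeff : coeff d q = 0 := by
          rw [hq, coeff_sub, coeff_smul, ← E_def d, ustr n hs _ _ hcon, coeff_monomial]
          have hEE : (E i s = E (d 0) (d 1)) ↔ (i = d 0 ∧ s = d 1) := E_eq_iff
          split_ifs with a b b'
          · simp
          · exact absurd (hEE.mpr ⟨a.1.symm, a.2.symm⟩) b
          · obtain ⟨h1, h2⟩ := hEE.mp b'
            exact absurd ⟨h1.symm, h2.symm⟩ a
          · simp
        rw [mem_support_iff] at hd
        exact hd hcoeff
      have hqmem : q ∈ Vv n ⊔ Uu n := by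
        rw [as_sum q]
        refine Submodule.sum_mem _ (fun d hd => ?_)
        rw [← E_def d]
        exact ih (d 0) (hsupp d hd) (d 1) _
      have : monomial (E i s) c = c • u - q := by rw [hq]; ring
      rw [this]
      exact Submodule.sub_mem _ (Submodule.mem_sup_right (Submodule.smul_mem _ _ hUmem)) hqmem

lemma sup_top (n : ℕ) : Vv n ⊔ Uu n = ⊤ := by
  rw [eq_top_iff]
  intro p _
  rw [as_sum p]
  refine Submodule.sum_mem _ (fun d hd => ?_)
  rw [← E_def d]
  exact mono_mem n (d 0) (d 1) _

lemma V_coeff (n : ℕ) {p : MvPolynomial (Fin 2) ℂ} (hp : p ∈ Vv n) :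
    ∀ i s, ee n i ≤ s → coeff (E i s) p = 0 := by
  refine Submodule.span_induction ?_ ?_ ?_ ?_ hp
  · rintro x ⟨⟨i0, s0⟩, hst, rfl⟩
    intro i s hs
    rw [coeff_monomial]
    split_ifs with h
    · obtain ⟨h1, h2⟩ := E_inj h
      exfalso
      simp only [Set.mem_setOf_eq] at hst
      have h1' : i0 = i := h1
      have h2' : s0 = s := h2
      rw [h1'] at hst
      omega
    · rfl
  · intro i s _; rw [coeff_zero]
  · intro x y _ _ hx hy i s hs
    rw [coeff_add, hx i s hs, hy i s hs, add_zero]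
  · intro a x _ hx i s hs
    rw [coeff_smul, hx i s hs, smul_zero]

noncomputable def utot (n : ℕ) : ℕ × ℕ → MvPolynomial (Fin 2) ℂ := fun μ =>
  if ee n μ.1 ≤ μ.2 then X 1 ^ (μ.2 - ee n μ.1) * w n μ.1 else 0

lemma U_le_utot (n : ℕ) : Uu n ≤ Submodule.span ℂ (Set.range (utot n)) := by
  rw [Uu, Submodule.span_le]
  rintro p ⟨i, c, rfl⟩
  refine Submodule.subset_span ⟨(i, c + ee n i), ?_⟩
  rw [utot]
  simp only
  rw [if_pos (by omega)]
  congr 2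
  omega

lemma inf_bot (n : ℕ) : Vv n ⊓ Uu n = ⊥ := by
  rw [eq_bot_iff]
  rintro p hp
  rw [Submodule.mem_inf] at hp
  obtain ⟨hpV, hpU⟩ := hp
  obtain ⟨l, hl⟩ := Finsupp.mem_span_range_iff_exists_finsupp.mp (U_le_utot n hpU)
  rw [Submodule.mem_bot]
  set T := l.support.filter (fun μ => ee n μ.1 ≤ μ.2) with hT
  rcases T.eq_empty_or_nonempty with hTe | hTne
  · rw [← hl, Finsupp.sum]
    refine Finset.sum_eq_zero (fun μ hμ => ?_)
    have : ¬ (ee n μ.1 ≤ μ.2) := by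
      intro hc
      have : μ ∈ T := Finset.mem_filter.mpr ⟨hμ, hc⟩
      rw [hTe] at this
      exact absurd this (Finset.notMem_empty μ)
    rw [utot, if_neg this, smul_zero]
  · exfalso
    obtain ⟨μs, hμsT, hmax⟩ := T.exists_max_image Prod.fst hTne
    set istar := μs.1 with histar
    have hμs_cond : ee n μs.1 ≤ μs.2 := (Finset.mem_filter.mp hμsT).2
    have hμs_supp : μs ∈ l.support := (Finset.mem_filter.mp hμsT).1
    have hc0 : coeff (E istar μs.2) p = 0 :=
      V_coeff n hpV istar μs.2 hμs_cond
    have hc1 : coeff (E istar μs.2) p = l μs := by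
      rw [← hl, Finsupp.sum, coeff_sum]
      have hterm : ∀ μ ∈ l.support,
          coeff (E istar μs.2) (l μ • utot n μ) = if μ = μs then l μ else 0 := by
        intro μ hμ
        rw [coeff_smul]
        by_cases hcond : ee n μ.1 ≤ μ.2
        · have hμT : μ ∈ T := Finset.mem_filter.mpr ⟨hμ, hcond⟩
          have hle : μ.1 ≤ istar := hmax μ hμT
          rw [utot, if_pos hcond, ustr n hcond istar μs.2 hle]
          split_ifs with h1 h2 h3
          · rw [smul_eq_mul, mul_one]
          · exfalso
            apply h2
            have hμeq : μ = (μ.1, μ.2) := rfl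
            rw [hμeq, ← h1.1, ← h1.2, histar]
          · exfalso
            rw [h3] at h1
            exact h1 ⟨histar, rfl⟩
          · rw [smul_zero]
        · rw [utot, if_neg hcond, coeff_zero, smul_zero]
          have : μ ≠ μs := by
            intro hc
            rw [hc] at hcond
            exact hcond hμs_cond
          rw [if_neg this]
      rw [Finset.sum_congr rfl hterm, Finset.sum_ite_eq' l.support μs (fun μ => l μ),
        if_pos hμs_supp]
    rw [hc0] at hc1
    exact (Finsupp.mem_support_iff.mp hμs_supp) hc1.symm

lemma gen_mem (n i c : ℕ) : X 1 ^ c * w n i ∈ Uu n := Submodule.subset_span ⟨i, c, rfl⟩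

lemma w_mem' (n i : ℕ) : w n i ∈ Uu n := by
  have := gen_mem n i 0
  rwa [pow_zero, one_mul] at this

lemma ee_eval (n i v : ℕ) (h : (n+1) - (i+1)/2 = v) : ee n i = v := h

lemma alpha_w (n : ℕ) : ∀ i, X 0 * w n i ∈ Uu n := by
  intro i
  rcases Nat.eq_zero_or_pos i with rfl | hpos
  · have key : X 0 * w n 0 = X 1 ^ 1 * w n 1 := by
      rw [w_zero, w_odd (by omega) (by omega), show zp 1 = X 0 from rfl,
        show ee n 1 = n from by unfold ee; omega]
      ring
    rw [key]; exact gen_mem n 1 1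
  rcases Nat.lt_or_ge i (2*n+1) with hlt | hge
  swap
  · -- i ≥ 2n+1
    have key : X 0 * w n i = w n (i+1) := by
      rw [w_big hge, w_big (by omega), show i+1-(2*n+1) = (i-(2*n+1))+1 from by omega,
        pow_succ]
      ring
    rw [key]; exact w_mem' n (i+1)
  rcases Nat.even_or_odd i with he | ho
  swap
  · -- i odd, i < 2n+1
    have hmod : i % 2 = 1 := Nat.odd_iff.mp ho
    have key : X 0 * w n i = w n (i+1) := by
      rw [w_odd hmod (by omega), w_even (by omega) (by omega) (by omega),
        show i+1-1 = i from by omega, show ee n (i+1) = ee n i from by unfold ee; omega]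
    rw [key]; exact w_mem' n (i+1)
  have hmod : i % 2 = 0 := Nat.even_iff.mp he
  -- i even, 0 < i < 2n+1
  rcases Nat.lt_or_ge i 3 with h2 | h3
  · -- i = 2, n ≥ 1
    have hi2 : i = 2 := by omega
    subst hi2
    obtain ⟨k, rfl⟩ : ∃ k, n = k + 1 := ⟨n - 1, by omega⟩
    have key : X 0 * w (k+1) 2 =
        X 1 ^ 1 * w (k+1) 3 - C 64 * w (k+1) 1 - C 4 * w (k+1) 0 := by
      rw [w_even (by omega) (by omega) (by omega), w_odd (show 3 % 2 = 1 from rfl) (by omega),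
        w_odd (show 1 % 2 = 1 from rfl) (by omega), w_zero,
        show ee (k+1) 2 = k+1 from by unfold ee; omega,
        show ee (k+1) 3 = k from by unfold ee; omega,
        show ee (k+1) 1 = k+1 from by unfold ee; omega,
        show (2:ℕ)-1 = 1 from rfl, show zp 1 = X 0 from rfl, zp3_id,
        show zp 1 = X 0 from rfl]
      ring
    rw [key]
    refine Submodule.sub_mem _ (Submodule.sub_mem _ (gen_mem _ 3 1) ?_) ?_
    · rw [C_mul']; exact Submodule.smul_mem _ _ (w_mem' _ 1)
    · rw [C_mul']; exact Submodule.smul_mem _ _ (w_mem' _ 0)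
  rcases Nat.lt_or_ge i 5 with h4 | h5
  · -- i = 4, n ≥ 2
    have hi4 : i = 4 := by omega
    subst hi4
    obtain ⟨k, rfl⟩ : ∃ k, n = k + 2 := ⟨n - 2, by omega⟩
    have h5id := zp_odd_rec 1
    norm_num at h5id
    -- h5id : zp 5 = X 0 * zp 4 + C 256 * zp 3 + C 24 * X 1 * zp 2
    have h4id := zp_even_rec 0
    norm_num at h4id
    -- h4id : zp 4 = X 0 * zp 3 + C 12 * X 1 * zp 1
    have key : X 0 * w (k+2) 4 =
        X 1 ^ 1 * w (k+2) 5 - C 256 * w (k+2) 3 - (C 12 + C 24) * w (k+2) 2 := by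
      rw [w_even (by omega) (by omega) (by omega), w_odd (show 5 % 2 = 1 from rfl) (by omega),
        w_odd (show 3 % 2 = 1 from rfl) (by omega),
        w_even (show 2 % 2 = 0 from rfl) (by omega) (by omega),
        show ee (k+2) 4 = k+1 from by unfold ee; omega,
        show ee (k+2) 5 = k from by unfold ee; omega,
        show ee (k+2) 3 = k+1 from by unfold ee; omega,
        show ee (k+2) 2 = k+2 from by unfold ee; omega,
        show (4:ℕ)-1 = 3 from rfl, show (2:ℕ)-1 = 1 from rfl,
        h5id, h4id, zp_two, show zp 1 = X 0 from rfl]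
      push_cast
      ring
    rw [key]
    refine Submodule.sub_mem _ (Submodule.sub_mem _ (gen_mem _ 5 1) ?_) ?_
    · rw [C_mul']; exact Submodule.smul_mem _ _ (w_mem' _ 3)
    · rw [show (C 12 + C 24 : MvPolynomial (Fin 2) ℂ) = C 36 from by rw [← map_add]; norm_num,
        C_mul']
      exact Submodule.smul_mem _ _ (w_mem' _ 2)
  · -- i = 2r+6, i < 2n+1
    obtain ⟨r, rfl⟩ : ∃ r, i = 2*r+6 := ⟨(i-6)/2, by omega⟩
    obtain ⟨a, rfl⟩ : ∃ a, n = r+3+a := ⟨n - (r+3), by omega⟩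
    have h7 := zp_odd_rec (r+2)
    rw [show 2*(r+2)+3 = 2*r+7 from by ring, show 2*(r+2)+2 = 2*r+6 from by ring,
      show 2*(r+2)+1 = 2*r+5 from by ring, show 2*(r+2) = 2*r+4 from by ring] at h7
    have h6 := zp_even_rec (r+1)
    rw [show 2*(r+1)+4 = 2*r+6 from by ring, show 2*(r+1)+3 = 2*r+5 from by ring,
      show 2*(r+1)+1 = 2*r+3 from by ring] at h6
    have h4 := zp_even_rec r
    -- h4 : zp (2r+4) = X0 * zp (2r+3) + C D * X1 * zp (2r+1)
    have key : X 0 * w (r+3+a) (2*r+6) =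
        X 1 ^ 1 * w (r+3+a) (2*r+7)
        - C (16 * (2*((r:ℂ)+2)+2)^2) * w (r+3+a) (2*r+5)
        - (C (2 * (2*((r:ℂ)+1)+3) * (2*((r:ℂ)+1)+2))
            + C (2 * (2*((r:ℂ)+2)+2) * (2*((r:ℂ)+2)+1))) * w (r+3+a) (2*r+4)
        - (C (2 * (2*((r:ℂ)+2)+2) * (2*((r:ℂ)+2)+1))
            * C (2 * (2*(r:ℂ)+3) * (2*(r:ℂ)+2))) * w (r+3+a) (2*r+1) := by
      rw [w_even (by omega) (by omega) (by omega),
        w_odd (by omega) (by omega), w_odd (by omega) (by omega),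
        w_even (by omega) (by omega) (by omega), w_odd (by omega) (by omega),
        show 2*r+6-1 = 2*r+5 from by omega, show 2*r+4-1 = 2*r+3 from by omega,
        show ee (r+3+a) (2*r+6) = a+1 from by unfold ee; omega,
        show ee (r+3+a) (2*r+7) = a from by unfold ee; omega,
        show ee (r+3+a) (2*r+5) = a+1 from by unfold ee; omega,
        show ee (r+3+a) (2*r+4) = a+2 from by unfold ee; omega,
        show ee (r+3+a) (2*r+1) = a+3 from by unfold ee; omega,
        h7, h6, h4]
      push_cast
      ring
    rw [key]
    refine Submodule.sub_mem _ (Submodule.sub_mem _ (Submodule.sub_mem _ (gen_mem _ _ 1) ?_) ?_) ?_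
    · rw [C_mul']; exact Submodule.smul_mem _ _ (w_mem' _ _)
    · rw [show (C (2 * (2*((r:ℂ)+1)+3) * (2*((r:ℂ)+1)+2))
            + C (2 * (2*((r:ℂ)+2)+2) * (2*((r:ℂ)+2)+1))) = C ((2 * (2*((r:ℂ)+1)+3) * (2*((r:ℂ)+1)+2)) + (2 * (2*((r:ℂ)+2)+2) * (2*((r:ℂ)+2)+1))) from by rw [map_add], C_mul']
      exact Submodule.smul_mem _ _ (w_mem' _ _)
    · rw [← map_mul, C_mul']
      exact Submodule.smul_mem _ _ (w_mem' _ _)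

lemma X1_mul_mem (n : ℕ) {q : MvPolynomial (Fin 2) ℂ} (hq : q ∈ Uu n) : X 1 * q ∈ Uu n := by
  refine Submodule.span_induction ?_ ?_ ?_ ?_ hq
  · rintro x ⟨i, c, rfl⟩
    have : X 1 * (X 1 ^ c * w n i) = X 1 ^ (c+1) * w n i := by ring
    rw [this]; exact gen_mem n i (c+1)
  · rw [mul_zero]; exact Submodule.zero_mem _
  · intro x y _ _ hx hy; rw [mul_add]; exact Submodule.add_mem _ hx hy
  · intro a x _ hx; rw [mul_smul_comm]; exact Submodule.smul_mem _ _ hx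

lemma X0_mul_mem (n : ℕ) {q : MvPolynomial (Fin 2) ℂ} (hq : q ∈ Uu n) : X 0 * q ∈ Uu n := by
  refine Submodule.span_induction ?_ ?_ ?_ ?_ hq
  · rintro x ⟨i, c, rfl⟩
    have h1 : X 0 * (X 1 ^ c * w n i) = X 1 ^ c * (X 0 * w n i) := by ring
    rw [h1]
    have h2 : ∀ c' (q : MvPolynomial (Fin 2) ℂ), q ∈ Uu n → X 1 ^ c' * q ∈ Uu n := by
      intro c' q hq
      induction c' with
      | zero => rwa [pow_zero, one_mul]
      | succ c' ih =>
        have : X 1 ^ (c'+1) * q = X 1 * (X 1 ^ c' * q) := by ring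
        rw [this]; exact X1_mul_mem n ih
    exact h2 c _ (alpha_w n i)
  · rw [mul_zero]; exact Submodule.zero_mem _
  · intro x y _ _ hx hy; rw [mul_add]; exact Submodule.add_mem _ hx hy
  · intro a x _ hx; rw [mul_smul_comm]; exact Submodule.smul_mem _ _ hx

lemma mul_mem_U (n : ℕ) (p : MvPolynomial (Fin 2) ℂ) {q : MvPolynomial (Fin 2) ℂ}
    (hq : q ∈ Uu n) : p * q ∈ Uu n := by
  induction p using MvPolynomial.induction_on with
  | C a => rw [C_mul']; exact Submodule.smul_mem _ _ hq
  | add p1 p2 h1 h2 => rw [add_mul]; exact Submodule.add_mem _ h1 h2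
  | mul_X p i h =>
    have : p * X i * q = X i * (p * q) := by ring
    rw [this]
    fin_cases i
    · exact X0_mul_mem n h
    · exact X1_mul_mem n h

/-- U as an ideal -/
noncomputable def UI (n : ℕ) : Ideal (MvPolynomial (Fin 2) ℂ) where
  carrier := Uu n
  add_mem' := fun ha hb => Submodule.add_mem _ ha hb
  zero_mem' := Submodule.zero_mem _
  smul_mem' := fun p q hq => by
    simpa [smul_eq_mul] using mul_mem_U n p hq

lemma cast_ne (a : ℕ) (h : a ≠ 0) : ((a:ℂ)) ≠ 0 := Nat.cast_ne_zero.mpr h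

lemma div_C_mem {J : Ideal (MvPolynomial (Fin 2) ℂ)} {c : ℂ} (hc : c ≠ 0)
    {x : MvPolynomial (Fin 2) ℂ} (h : C c * x ∈ J) : x ∈ J := by
  have : x = C c⁻¹ * (C c * x) := by
    rw [← mul_assoc, ← map_mul, inv_mul_cancel₀ hc, map_one, one_mul]
  rw [this]
  exact Ideal.mul_mem_left _ _ h

lemma zp_mem_J (n k : ℕ) (h : k = 2*n+1 ∨ k = 2*n+2 ∨ k = 2*n+3) : zp k ∈ Jp (2*n+1) := by
  rcases h with rfl | rfl | rfl
  · exact Ideal.subset_span (by left; rfl)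
  · exact Ideal.subset_span (by right; left; rw [show 2*n+1+1 = 2*n+2 from rfl])
  · exact Ideal.subset_span (by right; right; rw [show 2*n+1+2 = 2*n+3 from rfl]; rfl)

lemma mem3 (n : ℕ) : ∀ j, j ≤ n →
    (X 1 ^ j * zp (2*(n-j)+1) ∈ Jp (2*n+1) ∧ X 1 ^ j * zp (2*(n-j)+2) ∈ Jp (2*n+1)
      ∧ X 1 ^ j * zp (2*(n-j)+3) ∈ Jp (2*n+1)) := by
  intro j
  induction j with
  | zero =>
    intro _
    simp only [Nat.sub_zero, pow_zero, one_mul]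
    exact ⟨zp_mem_J n _ (by left; rfl), zp_mem_J n _ (by right; left; rfl),
      zp_mem_J n _ (by right; right; rfl)⟩
  | succ j ih =>
    intro hj
    obtain ⟨IH1, IH2, IH3⟩ := ih (by omega)
    set q := n - (j+1) with hqdef
    have h1 : n - j = q + 1 := by omega
    rw [h1] at IH1 IH2 IH3
    rw [show 2*(q+1)+1 = 2*q+3 from by ring] at IH1
    rw [show 2*(q+1)+2 = 2*q+4 from by ring] at IH2
    rw [show 2*(q+1)+3 = 2*q+5 from by ring] at IH3
    have hc1 : (2 * (2*(q:ℂ)+3) * (2*(q:ℂ)+2)) ≠ 0 := by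
      have : ((2*(2*q+3)*(2*q+2) : ℕ) : ℂ) = 2 * (2*(q:ℂ)+3) * (2*(q:ℂ)+2) := by
        push_cast; ring
      rw [← this]
      exact cast_ne _ (by positivity)
    have m1 : X 1 ^ (j+1) * zp (2*q+1) ∈ Jp (2*n+1) := by
      apply div_C_mem hc1
      have hEq : C (2 * (2*(q:ℂ)+3) * (2*(q:ℂ)+2)) * (X 1 ^ (j+1) * zp (2*q+1))
          = X 1 ^ j * zp (2*q+4) - X 0 * (X 1 ^ j * zp (2*q+3)) := by
        rw [zp_even_rec q]; ring
      rw [hEq]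
      exact Ideal.sub_mem _ IH2 (Ideal.mul_mem_left _ _ IH1)
    have hrec := zp_odd_rec (q+1)
    rw [show 2*(q+1)+3 = 2*q+5 from by ring, show 2*(q+1)+2 = 2*q+4 from by ring,
      show 2*(q+1)+1 = 2*q+3 from by ring, show 2*(q+1) = 2*q+2 from by ring] at hrec
    have hc2 : (2 * (2*((q:ℂ)+1)+2) * (2*((q:ℂ)+1)+1)) ≠ 0 := by
      have : ((2*(2*q+4)*(2*q+3) : ℕ) : ℂ) = 2 * (2*((q:ℂ)+1)+2) * (2*((q:ℂ)+1)+1) := by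
        push_cast; ring
      rw [← this]
      exact cast_ne _ (by positivity)
    have m2 : X 1 ^ (j+1) * zp (2*q+2) ∈ Jp (2*n+1) := by
      apply div_C_mem hc2
      have hEq : C (2 * (2*((q:ℂ)+1)+2) * (2*((q:ℂ)+1)+1)) * (X 1 ^ (j+1) * zp (2*q+2))
          = X 1 ^ j * zp (2*q+5) - X 0 * (X 1 ^ j * zp (2*q+4))
            - C (16 * (2*((q:ℂ)+1)+2)^2) * (X 1 ^ j * zp (2*q+3)) := by
        rw [hrec]; push_cast; ring
      rw [hEq]
      exact Ideal.sub_mem _ (Ideal.sub_mem _ IH3 (Ideal.mul_mem_left _ _ IH2))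
        (Ideal.mul_mem_left _ _ IH1)
    have m3 : X 1 ^ (j+1) * zp (2*q+3) ∈ Jp (2*n+1) := by
      have : X 1 ^ (j+1) * zp (2*q+3) = X 1 * (X 1 ^ j * zp (2*q+3)) := by ring
      rw [this]
      exact Ideal.mul_mem_left _ _ IH1
    exact ⟨m1, m2, m3⟩

lemma w_mem_J (n : ℕ) : ∀ i, w n i ∈ Jp (2*n+1) := by
  intro i
  rcases Nat.eq_zero_or_pos i with rfl | hpos
  · rw [w_zero]
    obtain ⟨h1, h2, h3⟩ := mem3 n n (le_refl n)
    rw [Nat.sub_self] at h1 h2 h3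
    norm_num at h1 h2 h3
    apply div_C_mem (show (4:ℂ) ≠ 0 from by norm_num)
    have hEq : C (4:ℂ) * X 1 ^ (n+1)
        = X 1 ^ n * zp 3 - X 0 ^ 2 * (X 1 ^ n * zp 1) - C 64 * (X 1 ^ n * zp 1) := by
      rw [zp3_id]; ring
    rw [hEq]
    exact Ideal.sub_mem _ (Ideal.sub_mem _ h3 (Ideal.mul_mem_left _ _ h1))
      (Ideal.mul_mem_left _ _ h1)
  rcases Nat.lt_or_ge i (2*n+1) with hlt | hge
  · rcases Nat.even_or_odd i with he | ho
    · have hmod : i % 2 = 0 := Nat.even_iff.mp he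
      obtain ⟨q, rfl⟩ : ∃ q, i = 2*q+2 := ⟨(i-2)/2, by omega⟩
      rw [w_even hmod (by omega) hlt, show 2*q+2-1 = 2*q+1 from by omega,
        show ee n (2*q+2) = n - q from by unfold ee; omega]
      apply Ideal.mul_mem_left
      have := (mem3 n (n-q) (by omega)).1
      rw [show n-(n-q) = q from by omega] at this
      exact this
    · have hmod : i % 2 = 1 := Nat.odd_iff.mp ho
      obtain ⟨q, rfl⟩ : ∃ q, i = 2*q+1 := ⟨(i-1)/2, by omega⟩
      rw [w_odd hmod (by omega), show ee n (2*q+1) = n - q from by unfold ee; omega]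
      have := (mem3 n (n-q) (by omega)).1
      rw [show n-(n-q) = q from by omega] at this
      exact this
  · rw [w_big hge]
    exact Ideal.mul_mem_left _ _ (zp_mem_J n _ (by left; rfl))

lemma gens_in_U (n : ℕ) : zp (2*n+1) ∈ Uu n ∧ zp (2*n+2) ∈ Uu n ∧ zp (2*n+3) ∈ Uu n := by
  have hg : zp (2*n+1) ∈ Uu n := by
    have : w n (2*n+1) = zp (2*n+1) := by
      rw [w_big (le_refl _), Nat.sub_self, pow_zero, one_mul]
    rw [← this]; exact w_mem' n _
  have hg1 : zp (2*n+2) ∈ Uu n := by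
    rcases Nat.eq_zero_or_pos n with rfl | hn
    · -- zp 2 = X 0 * zp 1
      rw [show (2*0+2 : ℕ) = 2 from rfl, zp_two]
      have : (X 0 : MvPolynomial (Fin 2) ℂ) = zp 1 := rfl
      nth_rewrite 2 [this]
      rw [show zp 1 = zp (2*0+1) from rfl]
      exact X0_mul_mem 0 hg
    · obtain ⟨k, rfl⟩ : ∃ k, n = k+1 := ⟨n-1, by omega⟩
      have hrec := zp_even_rec k
      rw [show 2*k+4 = 2*(k+1)+2 from by ring, show 2*k+3 = 2*(k+1)+1 from by ring] at hrec
      rw [hrec]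
      refine Submodule.add_mem _ (X0_mul_mem _ hg) ?_
      rw [mul_assoc, C_mul']
      refine Submodule.smul_mem _ _ ?_
      have hw : w (k+1) (2*k+1) = X 1 ^ 1 * zp (2*k+1) := by
        rw [w_odd (by omega) (by omega), show ee (k+1) (2*k+1) = 1 from by unfold ee; omega]
      have : X 1 * zp (2*k+1) = X 1 ^ 1 * zp (2*k+1) := by ring
      rw [this, ← hw]
      exact w_mem' _ _
  refine ⟨hg, hg1, ?_⟩
  have hrec := zp_odd_rec n
  rw [show 2*n+3 = 2*n+3 from rfl] at hrec
  rw [hrec]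
  refine Submodule.add_mem _ (Submodule.add_mem _ (X0_mul_mem _ hg1) ?_) ?_
  · rw [C_mul']; exact Submodule.smul_mem _ _ hg
  · rw [mul_assoc, C_mul']
    refine Submodule.smul_mem _ _ ?_
    rcases Nat.eq_zero_or_pos n with rfl | hn
    · rw [show zp (2*0) = 1 from rfl, mul_one]
      have : (X 1 : MvPolynomial (Fin 2) ℂ) = w 0 0 := by rw [w_zero, pow_one]
      rw [this]; exact w_mem' 0 0
    · obtain ⟨k, rfl⟩ : ∃ k, n = k+1 := ⟨n-1, by omega⟩
      rcases Nat.eq_zero_or_pos k with rfl | hk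
      · -- n = 1 : X 1 * zp 2 = X 0 * X 1 * zp 1 = w 1 2
        rw [show (2*(0+1) : ℕ) = 2 from rfl, zp_two]
        have : X 1 * (X 0 * X 0 : MvPolynomial (Fin 2) ℂ) = w 1 2 := by
          rw [w_even (by omega) (by omega) (by omega),
            show ee 1 2 = 1 from by unfold ee; omega, show (2:ℕ)-1 = 1 from rfl,
            show zp 1 = X 0 from rfl]
          ring
        rw [this]; exact w_mem' 1 2
      · obtain ⟨j, rfl⟩ : ∃ j, k = j+1 := ⟨k-1, by omega⟩
        -- n = j+2 : X 1 * zp (2j+4) = w n (2j+4) + C c * w n (2j+1)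
        have hrec2 := zp_even_rec j
        rw [show 2*(j+1+1) = 2*j+4 from by ring, hrec2]
        have hw1 : w (j+2) (2*j+4) = X 0 * (X 1 ^ 1 * zp (2*j+3)) := by
          rw [w_even (by omega) (by omega) (by omega),
            show 2*j+4-1 = 2*j+3 from by omega,
            show ee (j+2) (2*j+4) = 1 from by unfold ee; omega]
        have hw2 : w (j+2) (2*j+1) = X 1 ^ 2 * zp (2*j+1) := by
          rw [w_odd (by omega) (by omega),
            show ee (j+2) (2*j+1) = 2 from by unfold ee; omega]
        have key : X 1 * (X 0 * zp (2*j+3) + C (2 * (2*(j:ℂ)+3) * (2*(j:ℂ)+2)) * X 1 * zp (2*j+1))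
            = w (j+2) (2*j+4) + C (2 * (2*(j:ℂ)+3) * (2*(j:ℂ)+2)) * w (j+2) (2*j+1) := by
          rw [hw1, hw2]; ring
        rw [key]
        refine Submodule.add_mem _ (w_mem' _ _) ?_
        rw [C_mul']
        exact Submodule.smul_mem _ _ (w_mem' _ _)

lemma U_eq_J (n : ℕ) : Uu n = (Jp (2*n+1)).restrictScalars ℂ := by
  apply le_antisymm
  · rw [Uu, Submodule.span_le]
    rintro p ⟨i, c, rfl⟩
    exact Ideal.mul_mem_left _ _ (w_mem_J n i)
  · intro x hx
    have hJU : Jp (2*n+1) ≤ UI n := by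
      rw [Jp, Ideal.span_le]
      rintro p (rfl | rfl | hp)
      · exact (gens_in_U n).1
      · exact (gens_in_U n).2.1
      · rw [Set.mem_singleton_iff] at hp
        rw [hp]
        exact (gens_in_U n).2.2
    exact hJU hx

noncomputable def StdF (n : ℕ) : Finset (ℕ × ℕ) :=
  (Finset.range (2*n+1)).biUnion (fun i => (Finset.range (ee n i)).image (fun s => (i, s)))

lemma StdF_coe (n : ℕ) : (StdF n : Set (ℕ × ℕ)) = {μ : ℕ × ℕ | μ.2 < ee n μ.1} := by
  ext ⟨i, s⟩
  simp only [StdF, Finset.coe_biUnion, Set.mem_iUnion, Finset.mem_coe, Finset.mem_image,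
    Finset.mem_range, Set.mem_setOf_eq]
  constructor
  · rintro ⟨i', hi', s', hs', heq⟩
    obtain ⟨h1, h2⟩ := Prod.mk.injEq .. ▸ heq
    simp only [Prod.mk.injEq] at heq
    obtain ⟨rfl, rfl⟩ := heq
    exact hs'
  · intro hs
    refine ⟨i, ?_, s, hs, rfl⟩
    have : 0 < ee n i := by omega
    unfold ee at this
    omega

lemma sum_ee (n : ℕ) : ∑ i ∈ Finset.range (2*n+1), ee n i = (n+1)^2 := by
  induction n with
  | zero => simp [ee]
  | succ n ih =>
    have hsplit : (2*(n+1)+1) = (2*n+1) + 1 + 1 := by ring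
    rw [hsplit, Finset.sum_range_succ, Finset.sum_range_succ]
    have h1 : ∑ i ∈ Finset.range (2*n+1), ee (n+1) i
        = ∑ i ∈ Finset.range (2*n+1), (ee n i + 1) := by
      refine Finset.sum_congr rfl (fun i hi => ?_)
      rw [Finset.mem_range] at hi
      unfold ee
      omega
    rw [h1, Finset.sum_add_distrib, ih, Finset.sum_const, Finset.card_range]
    have h2 : ee (n+1) (2*n+1) = 1 := by unfold ee; omega
    have h3 : ee (n+1) (2*n+1+1) = 1 := by unfold ee; omega
    rw [h2, h3, smul_eq_mul]
    have e1 : (n+1)^2 = n^2+2*n+1 := by ring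
    have e2 : (n+1+1)^2 = n^2+4*n+4 := by ring
    omega

lemma StdF_card (n : ℕ) : (StdF n).card = (n+1)^2 := by
  rw [StdF, Finset.card_biUnion]
  · rw [← sum_ee n]
    refine Finset.sum_congr rfl (fun i _ => ?_)
    rw [Finset.card_image_of_injective _ (fun a b hab => by simpa using hab), Finset.card_range]
  · intro x _ y _ hxy
    simp only [Finset.disjoint_left, Finset.mem_image, Finset.mem_range]
    rintro a ⟨s1, _, rfl⟩ ⟨s2, _, heq⟩
    simp only [Prod.mk.injEq] at heq
    exact hxy heq.1.symm

lemma Vv_fd (n : ℕ) : FiniteDimensional ℂ ↥(Vv n) := by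
  rw [Vv, ← StdF_coe]
  exact FiniteDimensional.span_of_finite ℂ ((StdF n).finite_toSet.image _)

lemma Vv_finrank (n : ℕ) : Module.finrank ℂ ↥(Vv n) = (n+1)^2 := by
  rw [Vv, ← StdF_coe, Set.image_eq_range, finrank_span_eq_card]
  · rw [show Fintype.card ↑(↑(StdF n) : Set (ℕ × ℕ)) = (StdF n).card from by
      simp [Finset.coe_sort_coe, Fintype.card_coe], StdF_card]
  have hinj : Function.Injective (fun μ : ↥(StdF n) => E (μ.1).1 (μ.1).2) := by
    rintro ⟨⟨a, b⟩, ha⟩ ⟨⟨c, d⟩, hc⟩ heq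
    simp only at heq
    obtain ⟨h1, h2⟩ := E_inj heq
    simp only [Subtype.mk.injEq, Prod.mk.injEq]
    exact ⟨h1, h2⟩
  have := ((basisMonomials (Fin 2) ℂ).linearIndependent).comp _ hinj
  rw [coe_basisMonomials] at this
  exact this

theorem finrank_quotient_Jp_odd' (n : ℕ) :
    FiniteDimensional ℂ (MvPolynomial (Fin 2) ℂ ⧸ Jp (2*n+1)) ∧
    Module.finrank ℂ (MvPolynomial (Fin 2) ℂ ⧸ Jp (2*n+1)) = (n+1)^2 := by
  have hcompl : IsCompl ((Jp (2*n+1)).restrictScalars ℂ) (Vv n) := by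
    rw [← U_eq_J]
    exact (⟨disjoint_iff.mpr (inf_bot n), codisjoint_iff.mpr (sup_top n)⟩ :
      IsCompl (Vv n) (Uu n)).symm
  have e1 := Submodule.quotientEquivOfIsCompl _ _ hcompl
  have f := (Ideal.Quotient.mkₐ ℂ (Jp (2*n+1))).toLinearMap
  have hker : LinearMap.ker (Ideal.Quotient.mkₐ ℂ (Jp (2*n+1))).toLinearMap
      = (Jp (2*n+1)).restrictScalars ℂ := by
    ext x
    simp only [LinearMap.mem_ker, AlgHom.toLinearMap_apply, Ideal.Quotient.mkₐ_eq_mk,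
      Ideal.Quotient.eq_zero_iff_mem, Submodule.restrictScalars_mem]
  have e2 : (MvPolynomial (Fin 2) ℂ ⧸ (Jp (2*n+1)).restrictScalars ℂ) ≃ₗ[ℂ]
      (MvPolynomial (Fin 2) ℂ ⧸ Jp (2*n+1)) := by
    rw [← hker]
    exact (Ideal.Quotient.mkₐ ℂ (Jp (2*n+1))).toLinearMap.quotKerEquivOfSurjective
      (Ideal.Quotient.mkₐ_surjective ℂ _)
  have E3 := (e2.symm.trans e1)
  constructor
  · have : FiniteDimensional ℂ ↥(Vv n) := Vv_fd n
    exact Module.Finite.equiv E3.symm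
  · rw [E3.finrank_eq, Vv_finrank]

/-- For every odd g ≥ 1, ℂ[α,γ]/J_g^+ is finite dimensional over ℂ of dimension (g+1)²/4. -/
theorem finrank_quotient_Jp_odd (g : ℕ) (hg : 1 ≤ g) (hodd : Odd g) :
    FiniteDimensional ℂ (MvPolynomial (Fin 2) ℂ ⧸ Jp g) ∧
    Module.finrank ℂ (MvPolynomial (Fin 2) ℂ ⧸ Jp g) = (g + 1) ^ 2 / 4 := by
  obtain ⟨n, rfl⟩ : ∃ n, g = 2*n+1 := by
    obtain ⟨k, hk⟩ := hodd
    exact ⟨k, by omega⟩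
  obtain ⟨h1, h2⟩ := finrank_quotient_Jp_odd' n
  refine ⟨h1, ?_⟩
  rw [h2, show (2*n+1+1)^2 = ((n+1)^2) * 4 from by ring, Nat.mul_div_cancel _ (by norm_num)]
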